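/- arXiv:2410.19441 — 2 statements merged into one kernel-verified Lean document; each statement's English description precedes it below -/
import Mathlib

section
/- Let λ₁ ≥ λ₂ ≥ 1, α = λ₁ - λ₂ + 1, L = least natural number with λ₂ < 2^L, ν = ν₂(α). Define a = ν₂(α), and if α is not a power of two, b = ν₂(α + 2^a), c = ν₂(α - 2^a). Then the following two conditions are equivalent: (I) α is a power of two, or (α not a power of two and c > b and 2^c > λ₂), or (α not a power of two and c < b and 2^b + 2^c > λ₂); (II) α + 2^ν ≡ 0 (mod 2^L), or (α + 2^ν ≡ 2^{L-1} (mod 2^L) and 2^{ν+1} + 2^{L-1} > λ₂), or α - 2^ν ≡ 0 (mod 2^L). -/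
/-- `L2 m` is the least `L` with `m < 2 ^ L`. -/
def L2 (m : ℕ) : ℕ :=
  Nat.find (⟨m, Nat.lt_two_pow_self (n := m)⟩ : ∃ K, m < 2 ^ K)

lemma L2_spec (m : ℕ) : m < 2 ^ L2 m :=
  Nat.find_spec (⟨m, Nat.lt_two_pow_self (n := m)⟩ : ∃ K, m < 2 ^ K)

lemma L2_pos {m : ℕ} (h : 1 ≤ m) : 1 ≤ L2 m := by
  by_contra hc
  have h0 : L2 m = 0 := by omega
  have := L2_spec m
  rw [h0] at this
  simp at this
  omega

lemma L2_le {m : ℕ} (h : 1 ≤ m) : 2 ^ (L2 m - 1) ≤ m := by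
  by_contra hc
  push_neg at hc
  exact Nat.find_min _ (Nat.sub_lt (L2_pos h) one_pos) hc

lemma val_mul_pow {v q : ℕ} (hq : ¬ 2 ∣ q) : padicValNat 2 (2 ^ v * q) = v := by
  haveI : Fact (Nat.Prime 2) := ⟨Nat.prime_two⟩
  have hq0 : q ≠ 0 := by rintro rfl; exact hq (dvd_zero 2)
  rw [padicValNat.mul (pow_ne_zero v two_ne_zero) hq0, padicValNat.prime_pow (p := 2),
    padicValNat.eq_zero_of_not_dvd hq, add_zero]

lemma exists_odd (x : ℕ) (hx : x ≠ 0) :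
    ∃ q, x = 2 ^ padicValNat 2 x * q ∧ ¬ 2 ∣ q := by
  obtain ⟨q, hq⟩ := pow_padicValNat_dvd (p := 2) (n := x)
  refine ⟨q, hq, fun hdvd => ?_⟩
  obtain ⟨r, hr⟩ := hdvd
  refine pow_succ_padicValNat_not_dvd (p := 2) hx ⟨r, ?_⟩
  conv_lhs => rw [hq]
  rw [hr, pow_succ]; ring

lemma pow_dvd_iff_le_val {x : ℕ} (hx : x ≠ 0) (K : ℕ) :
    2 ^ K ∣ x ↔ K ≤ padicValNat 2 x := by
  rw [Nat.Prime.pow_dvd_iff_le_factorization Nat.prime_two hx,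
    Nat.factorization_def x Nat.prime_two]

lemma mod_pow_eq_zero_iff {x : ℕ} (hx : x ≠ 0) (K : ℕ) :
    x % 2 ^ K = 0 ↔ K ≤ padicValNat 2 x := by
  rw [← Nat.dvd_iff_mod_eq_zero]
  exact pow_dvd_iff_le_val hx K

lemma mod_pow_eq_half_iff {x : ℕ} (hx : x ≠ 0) {K : ℕ} (hK : 1 ≤ K) :
    x % 2 ^ K = 2 ^ (K - 1) % 2 ^ K ↔ padicValNat 2 x = K - 1 := by
  have hlt : 2 ^ (K - 1) < 2 ^ K := Nat.pow_lt_pow_right one_lt_two (by omega)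
  have h2K : 2 ^ K = 2 ^ (K - 1) * 2 := by
    rw [← pow_succ]; congr 1; omega
  rw [Nat.mod_eq_of_lt hlt]
  constructor
  · intro hmod
    have hdm := Nat.div_add_mod x (2 ^ K)
    have hx' : x = 2 ^ (K - 1) * (2 * (x / 2 ^ K) + 1) := by
      rw [hmod] at hdm
      rw [mul_add, mul_one, ← mul_assoc, ← h2K]
      omega
    rw [hx']
    exact val_mul_pow (by omega)
  · intro hval
    obtain ⟨q, hq, hqodd⟩ := exists_odd x hx
    rw [hval] at hq
    obtain ⟨t, rfl⟩ : ∃ t, q = 2 * t + 1 := ⟨q / 2, by omega⟩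
    have hx' : x = 2 ^ (K - 1) + 2 ^ K * t := by rw [hq, h2K]; ring
    rw [hx', Nat.add_mul_mod_self_left, Nat.mod_eq_of_lt hlt]

theorem stmt_9 (lam1 lam2 α : ℕ) (h21 : lam2 ≤ lam1) (hlam : 1 ≤ lam2)
    (hαdef : α = lam1 - lam2 + 1) :
    ((∃ k, α = 2 ^ k) ∨
      (¬(∃ k, α = 2 ^ k) ∧
        padicValNat 2 (α + 2 ^ padicValNat 2 α) <
          padicValNat 2 (α - 2 ^ padicValNat 2 α) ∧
        lam2 < 2 ^ padicValNat 2 (α - 2 ^ padicValNat 2 α)) ∨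
      (¬(∃ k, α = 2 ^ k) ∧
        padicValNat 2 (α - 2 ^ padicValNat 2 α) <
          padicValNat 2 (α + 2 ^ padicValNat 2 α) ∧
        lam2 < 2 ^ padicValNat 2 (α + 2 ^ padicValNat 2 α) +
          2 ^ padicValNat 2 (α - 2 ^ padicValNat 2 α)))
    ↔
    ((α + 2 ^ padicValNat 2 α) % 2 ^ L2 lam2 = 0 ∨
      ((α + 2 ^ padicValNat 2 α) % 2 ^ L2 lam2 = 2 ^ (L2 lam2 - 1) % 2 ^ L2 lam2 ∧
        lam2 < 2 ^ (padicValNat 2 α + 1) + 2 ^ (L2 lam2 - 1)) ∨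
      (α - 2 ^ padicValNat 2 α) % 2 ^ L2 lam2 = 0) := by
  have hα : 1 ≤ α := by omega
  set a := padicValNat 2 α with ha
  set L := L2 lam2 with hLdef
  have hL2 : lam2 < 2 ^ L := L2_spec lam2
  have hL1 : 1 ≤ L := L2_pos hlam
  have hL3 : 2 ^ (L - 1) ≤ lam2 := L2_le hlam
  by_cases hpow : ∃ k, α = 2 ^ k
  · obtain ⟨k, hk⟩ := hpow
    have hak : a = k := by rw [ha, hk, padicValNat.prime_pow]
    have hz : α - 2 ^ a = 0 := by rw [hk, hak]; omega
    constructor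
    · intro _
      right; right
      rw [hz]
      simp
    · intro _
      left; exact ⟨k, hk⟩
  · obtain ⟨m, hm, hmodd⟩ := exists_odd α (by omega)
    rw [← ha] at hm
    have hm0 : m ≠ 0 := by rintro rfl; omega
    have hm1 : m ≠ 1 := by
      rintro rfl; exact hpow ⟨a, by rw [hm, mul_one]⟩
    have hm3 : 3 ≤ m := by omega
    have hplus : α + 2 ^ a = 2 ^ a * (m + 1) := by rw [hm]; ring
    have hminus : α - 2 ^ a = 2 ^ a * (m - 1) := by
      rw [hm, Nat.mul_sub, mul_one]
    have hplus0 : α + 2 ^ a ≠ 0 := by positivity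
    have hminus0 : α - 2 ^ a ≠ 0 := by
      rw [hminus]
      exact Nat.mul_ne_zero (pow_ne_zero a two_ne_zero) (by omega)
    obtain ⟨p, hp, hpodd⟩ := exists_odd (m + 1) (by omega)
    obtain ⟨q, hq, hqodd⟩ := exists_odd (m - 1) (by omega)
    set β := padicValNat 2 (m + 1) with hβdef
    set γ := padicValNat 2 (m - 1) with hγdef
    have hb : padicValNat 2 (α + 2 ^ a) = a + β := by
      rw [hplus, hp, ← mul_assoc, ← pow_add]
      exact val_mul_pow hpodd
    have hc : padicValNat 2 (α - 2 ^ a) = a + γ := by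
      rw [hminus, hq, ← mul_assoc, ← pow_add]
      exact val_mul_pow hqodd
    have hβ1 : 1 ≤ β := by
      have h2d : (2:ℕ) ^ 1 ∣ m + 1 := by rw [pow_one]; omega
      exact (pow_dvd_iff_le_val (by omega) 1).mp h2d
    have hγ1 : 1 ≤ γ := by
      have h2d : (2:ℕ) ^ 1 ∣ m - 1 := by rw [pow_one]; omega
      exact (pow_dvd_iff_le_val (by omega) 1).mp h2d
    have hnotboth : ¬(2 ≤ β ∧ 2 ≤ γ) := by
      rintro ⟨h1, h2⟩
      have d1 : (2:ℕ) ^ 2 ∣ m + 1 := (pow_dvd_iff_le_val (by omega) 2).mpr h1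
      have d2 : (2:ℕ) ^ 2 ∣ m - 1 := (pow_dvd_iff_le_val (by omega) 2).mpr h2
      norm_num at d1 d2
      omega
    have hA : (α + 2 ^ a) % 2 ^ L = 0 ↔ L ≤ a + β := by
      rw [mod_pow_eq_zero_iff hplus0, hb]
    have hB : (α + 2 ^ a) % 2 ^ L = 2 ^ (L - 1) % 2 ^ L ↔ a + β = L - 1 := by
      rw [mod_pow_eq_half_iff hplus0 hL1, hb]
    have hC : (α - 2 ^ a) % 2 ^ L = 0 ↔ L ≤ a + γ := by
      rw [mod_pow_eq_zero_iff hminus0, hc]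
    rw [hA, hB, hC, hb, hc]
    have plt : ∀ {u v : ℕ}, 2 ^ u < 2 ^ v ↔ u < v :=
      fun {u v} => Nat.pow_lt_pow_iff_right one_lt_two
    have ple : ∀ {u v : ℕ}, u ≤ v → (2:ℕ) ^ u ≤ 2 ^ v :=
      fun {u v} h => Nat.pow_le_pow_right (by norm_num) h
    rcases Nat.lt_trichotomy β γ with hlt | heq | hgt
    · constructor
      · rintro (hp' | ⟨-, -, hlc⟩ | ⟨-, hcb, -⟩)
        · exact absurd hp' hpow
        · have h1 : L - 1 < a + γ := plt.mp (lt_of_le_of_lt hL3 hlc)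
          exact Or.inr (Or.inr (by omega))
        · exact absurd hcb (by omega)
      · rintro (hA' | ⟨hB', -⟩ | hC')
        · exact Or.inr (Or.inl ⟨hpow, by omega, lt_of_lt_of_le hL2 (ple (by omega))⟩)
        · exact Or.inr (Or.inl ⟨hpow, by omega, lt_of_lt_of_le hL2 (ple (by omega))⟩)
        · exact Or.inr (Or.inl ⟨hpow, by omega, lt_of_lt_of_le hL2 (ple hC')⟩)
    · exfalso
      have hβe : β = 1 := by omega
      have hγe : γ = 1 := by omega
      rw [hβe, pow_one] at hp
      rw [hγe, pow_one] at hq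
      omega
    · have hγe : γ = 1 := by omega
      constructor
      · rintro (hp' | ⟨-, hbc, -⟩ | ⟨-, -, hl⟩)
        · exact absurd hp' hpow
        · exact absurd hbc (by omega)
        · have hle : (2:ℕ) ^ (a + γ) ≤ 2 ^ (a + β) := ple (by omega)
          have hps : (2:ℕ) ^ (a + β + 1) = 2 ^ (a + β) * 2 := pow_succ 2 (a + β)
          have h2 : 2 ^ (a + β) + 2 ^ (a + γ) ≤ 2 ^ (a + β + 1) := by omega
          have h3 : (2:ℕ) ^ (L - 1) < 2 ^ (a + β + 1) :=
            lt_of_le_of_lt hL3 (lt_of_lt_of_le hl h2)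
          have h4 : L - 1 < a + β + 1 := plt.mp h3
          by_cases hLb : L ≤ a + β
          · exact Or.inl hLb
          · refine Or.inr (Or.inl ⟨by omega, ?_⟩)
            have e1 : L - 1 = a + β := by omega
            have e2 : a + γ = a + 1 := by omega
            rw [e1]
            rw [e2] at hl
            omega
      · rintro (hA' | ⟨hB', hlam'⟩ | hC')
        · refine Or.inr (Or.inr ⟨hpow, by omega, ?_⟩)
          exact lt_of_lt_of_le hL2 (le_trans (ple hA') (Nat.le_add_right _ _))
        · refine Or.inr (Or.inr ⟨hpow, by omega, ?_⟩)
          have e1 : L - 1 = a + β := by omega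
          rw [e1] at hlam'
          have e2 : (2:ℕ) ^ (a + γ) = 2 ^ (a + 1) := by rw [hγe]
          omega
        · refine Or.inr (Or.inr ⟨hpow, by omega, ?_⟩)
          exact lt_of_lt_of_le hL2
            (le_trans (ple (le_trans hC' (by omega : a + γ ≤ a + β))) (Nat.le_add_right _ _))
end

section
/- Let λ₂ ≥ 12, α ≥ 1 with ν₂(α) = 1, L the least natural number with λ₂ < 2^L, and 2^L ∣ (α + 2). Then d = 4 satisfies (α - 2 + 2d) ⊇_2 d (so Y^{λ±4} is a summand of the hook Specht module), while setting α' = α + 8, ν' = ν₂(α'), L' the least natural with λ₂ - 4 < 2^{L'}, one has 2^{L'} ∤ (α' + 2^{ν'}) (so that summand is not uniserial). -/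
/-- `a ⊇_2 b`: every binary digit of `b` is `0` or equals the corresponding digit of `a`. -/
def Sup2 (a b : ℕ) : Prop :=
  ∀ i, b.testBit i = false ∨ b.testBit i = a.testBit i

theorem stmt_13 (lam2 α : ℕ) (hlam : 12 ≤ lam2) (hα : 1 ≤ α)
    (hν : padicValNat 2 α = 1)
    (hmod : 2 ^ L2 lam2 ∣ (α + 2)) :
    Sup2 (α - 2 + 2 * 4) 4 ∧
      ¬ 2 ^ L2 (lam2 - 4) ∣ (α + 8 + 2 ^ padicValNat 2 (α + 8)) := by
  have hspec : lam2 < 2 ^ L2 lam2 := Nat.find_spec (⟨lam2, Nat.lt_two_pow_self (n := lam2)⟩ : ∃ K, lam2 < 2 ^ K)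
  have hL : 4 ≤ L2 lam2 := by
    by_contra h
    push_neg at h
    have : 2 ^ L2 lam2 ≤ 2 ^ 3 := Nat.pow_le_pow_right (by norm_num) (by omega)
    omega
  have h16 : (16 : ℕ) ∣ α + 2 := by
    refine dvd_trans ?_ hmod
    calc (16 : ℕ) = 2 ^ 4 := by norm_num
    _ ∣ 2 ^ L2 lam2 := pow_dvd_pow 2 hL
  obtain ⟨k, hk⟩ := h16
  -- α = 16k - 2, k ≥ 1
  have hk1 : 1 ≤ k := by omega
  have hα14 : α = 16 * k - 2 := by omega
  constructor
  · intro i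
    rcases eq_or_ne i 2 with rfl | hi
    · right
      have h4 : Nat.testBit 4 2 = true := by decide
      have h5 : Nat.testBit (α - 2 + 2 * 4) 2 = true := by
        rw [show α - 2 + 2 * 4 = 16 * k + 4 by omega]
        rw [Nat.testBit_eq_decide_div_mod_eq]
        simp only [pow_succ, pow_zero, one_mul]
        rw [decide_eq_true_eq]
        omega
      rw [h4, h5]
    · left
      have : (4 : ℕ) = 2 ^ 2 := by norm_num
      rw [this, Nat.testBit_two_pow]
      simpa using fun h => hi h.symm
  · have hval : padicValNat 2 (α + 8) = 1 := by
      have h6 : α + 8 = 2 * (8 * k + 3) := by omega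
      rw [h6]
      have hodd : padicValNat 2 (8 * k + 3) = 0 := by
        apply padicValNat.eq_zero_of_not_dvd
        omega
      rw [padicValNat.mul (by norm_num) (by omega), hodd,
        padicValNat.self (by norm_num)]
    rw [hval]
    have hspec' : lam2 - 4 < 2 ^ L2 (lam2 - 4) := Nat.find_spec (⟨lam2 - 4, Nat.lt_two_pow_self (n := lam2 - 4)⟩ : ∃ K, lam2 - 4 < 2 ^ K)
    have hL' : 4 ≤ L2 (lam2 - 4) := by
      by_contra h
      push_neg at h
      have : 2 ^ L2 (lam2 - 4) ≤ 2 ^ 3 := Nat.pow_le_pow_right (by norm_num) (by omega)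
      omega
    intro hdvd
    have h16' : (16 : ℕ) ∣ α + 8 + 2 ^ 1 := by
      refine dvd_trans ?_ hdvd
      calc (16 : ℕ) = 2 ^ 4 := by norm_num
      _ ∣ 2 ^ L2 (lam2 - 4) := pow_dvd_pow 2 hL'
    obtain ⟨m, hm⟩ := h16'
    omega
end
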